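/- arXiv:1904.06921 — 5 statements merged into one kernel-verified Lean document; each statement's English description precedes it below -/
import Mathlib

section
/- Let (M,d) be a geodesic metric space, U ⊆ M, λ > 1, and f : M → M a homeomorphism such that d(f(x),f(y)) ≥ λ·d(x,y) for all x,y ∈ U. Then for every x and every η > 0 with B_η(x) ⊆ U, the open ball B_{λη}(f(x)) is contained in f(B_η(x)). -/
/-!
Pull a geodesic from `f x` to `y` back by `f⁻¹`. As long as the pulled-back path stays in `U`,
expansion makes it `1/λ` times shorter than the geodesic, so at time `t` it is within `t / λ`
of `x`; since `d(f x, y) < λ η`, this keeps it inside `B_η(x) ⊆ U`, and a continuous induction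
along the geodesic shows that the bound holds up to its endpoint, which is then `f⁻¹ y ∈ B_η(x)`.
-/

open Set Filter Topology Metric

/-- `g` is `(lam, U)`-expanding. -/
def ExpandingOn {M N : Type*} [PseudoMetricSpace M] [PseudoMetricSpace N]
    (lam : ℝ) (g : M → N) (U : Set M) : Prop :=
  ∀ a ∈ U, ∀ b ∈ U, lam * dist a b ≤ dist (g a) (g b)

section

variable {M N : Type*} [PseudoMetricSpace M] [PseudoMetricSpace N]
  {lam : ℝ} {g : M → N} {U : Set M} {σ : ℝ → M} {d : ℝ}

theorem ExpandingOn.dist_le_div_of_lipschitzOnWith_comp (hg : ExpandingOn lam g U)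
    (hlam : 0 < lam) (hgσ : LipschitzOnWith 1 (g ∘ σ) (Icc 0 d)) {s t : ℝ}
    (hs : s ∈ Icc 0 d) (ht : t ∈ Icc 0 d) (hst : s ≤ t) (hσs : σ s ∈ U) (hσt : σ t ∈ U) :
    dist (σ s) (σ t) ≤ (t - s) / lam := by
  rw [le_div_iff₀ hlam, mul_comm]
  calc lam * dist (σ s) (σ t) ≤ dist (g (σ s)) (g (σ t)) := hg _ hσs _ hσt
    _ ≤ dist s t := by simpa using hgσ.dist_le_mul s hs t ht
    _ = t - s := by rw [Real.dist_eq, abs_sub_comm, abs_of_nonneg (sub_nonneg.2 hst)]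

theorem ExpandingOn.dist_apply_zero_le_div (hg : ExpandingOn lam g U)
    (hlam : 0 < lam) (hσ : ContinuousOn σ (Icc 0 d)) (hgσ : LipschitzOnWith 1 (g ∘ σ) (Icc 0 d))
    {η : ℝ} (hd : d < lam * η) (hU : ball (σ 0) η ⊆ U) :
    ∀ t ∈ Icc 0 d, dist (σ 0) (σ t) ≤ t / lam := by
  set S := {t | dist (σ 0) (σ t) ≤ t / lam}
  have hclosed : IsClosed (S ∩ Icc 0 d) := by
    rw [inter_comm]
    exact isClosed_Icc.isClosed_le ((continuous_const.dist continuous_id).comp_continuousOn hσ)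
      (continuousOn_id.div_const lam)
  have hstart : (0 : ℝ) ∈ S := by simp [S]
  refine hclosed.Icc_subset_of_forall_mem_nhdsWithin hstart fun t ⟨htS, ht0, htd⟩ ↦ ?_
  have hσt : σ t ∈ ball (σ 0) η := by
    rw [mem_ball_comm, mem_ball]
    calc dist (σ 0) (σ t) ≤ t / lam := htS
      _ < η := by rw [div_lt_iff₀' hlam]; linarith
  have hnhds : 𝓝[Ioc t d] t = 𝓝[>] t := nhdsWithin_Ioc_eq_nhdsGT htd
  have hcont : Tendsto σ (𝓝[>] t) (𝓝 (σ t)) :=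
    hnhds ▸ (hσ t ⟨ht0, htd.le⟩).mono (Ioc_subset_Icc_self.trans (Icc_subset_Icc_left ht0))
  filter_upwards [hcont (isOpen_ball.mem_nhds hσt), hnhds ▸ self_mem_nhdsWithin]
    with t' hσt' ⟨htt', ht'd⟩
  have hIcc : Icc t d ⊆ Icc 0 d := Icc_subset_Icc_left ht0
  calc dist (σ 0) (σ t') ≤ dist (σ 0) (σ t) + dist (σ t) (σ t') := dist_triangle _ _ _
    _ ≤ t / lam + (t' - t) / lam := add_le_add htS <|
      hg.dist_le_div_of_lipschitzOnWith_comp hlam hgσ (hIcc ⟨le_rfl, htd.le⟩)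
        (hIcc ⟨htt'.le, ht'd⟩) htt'.le (hU hσt) (hU hσt')
    _ = t' / lam := by ring

end

/-- In a geodesic metric space, a `(lam, U)`-expanding homeomorphism satisfies the
ball-expansion property: `B_{lam·η}(f x) ⊆ f(B_η(x))` whenever `B_η(x) ⊆ U`. -/
theorem expanding_ball_of_geodesic {M : Type*} [MetricSpace M]
    (hgeo : ∀ x y : M, ∃ γ : ℝ → M, γ 0 = x ∧ γ (dist x y) = y ∧
      ∀ s ∈ Set.Icc (0 : ℝ) (dist x y), ∀ t ∈ Set.Icc (0 : ℝ) (dist x y),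
        dist (γ s) (γ t) = |s - t|)
    (f : M ≃ₜ M) (U : Set M) (lam : ℝ) (hlam : 1 < lam)
    (hexp : ∀ x ∈ U, ∀ y ∈ U, lam * dist x y ≤ dist (f x) (f y)) :
    ∀ (x : M) (η : ℝ), 0 < η → Metric.ball x η ⊆ U →
      Metric.ball (f x) (lam * η) ⊆ f '' Metric.ball x η := by
  intro x η _ hU y hy
  obtain ⟨γ, hγ0, hγd, hγ⟩ := hgeo (f x) y
  have hlam0 : 0 < lam := zero_lt_one.trans hlam
  have hd : dist (f x) y < lam * η := by rwa [mem_ball, dist_comm] at hy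
  have hγlip : LipschitzOnWith 1 γ (Icc 0 (dist (f x) y)) :=
    LipschitzOnWith.of_dist_le_mul fun s hs t ht ↦ by simp [hγ s hs t ht, Real.dist_eq]
  have hσ0 : f.symm (γ 0) = x := by simp [hγ0]
  have hbound := ExpandingOn.dist_apply_zero_le_div (σ := f.symm ∘ γ) hexp
    hlam0 (f.symm.continuous.comp_continuousOn hγlip.continuousOn)
    (by simpa [Function.comp_def] using hγlip) hd (by simpa [hσ0] using hU)
    _ (right_mem_Icc.2 dist_nonneg)
  refine ⟨f.symm y, ?_, f.apply_symm_apply y⟩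
  rw [mem_ball, dist_comm]
  simp only [Function.comp_apply, hσ0, hγd] at hbound
  exact hbound.trans_lt (by rwa [div_lt_iff₀' hlam0])
end

section
/- Let (M,d) be a proper metric space, U ⊆ M a bounded open subset, λ > 1, and f a homeomorphism of M that is λ-expanding on U. Then for every δ > 0 there exists δ' > 0 such that f is (λ, U'; δ')-expanding, where U' is the interior of U^δ = {x ∈ U : B_δ(x) ⊆ U}. That is: f is λ-expanding on U', and whenever B_η(x) ⊆ U' with η ≤ δ', one has B_{λη}(f(x)) ⊆ f(B_η(x)). -/
/-!
By Heine–Cantor, `f⁻¹` is uniformly continuous at the compact set `f (closure U)`: there is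
`ε > 0` with `dist (f x) y < ε → dist x (f⁻¹ y) < δ` for all `x ∈ U`. Take `δ' = ε / lam`.
If `B_η(x) ⊆ U'` with `η ≤ δ'` and `y ∈ B_{lam η}(f x)`, then `z = f⁻¹ y` lies in
`B_δ(x) ⊆ U`, so expansion on `U` gives `lam · dist x z ≤ dist (f x) y < lam η`,
i.e. `z ∈ B_η(x)`.
-/

open Metric Set

theorem IsCompact.exists_pos_forall_dist_lt_of_continuous {α β : Type*} [PseudoMetricSpace α]
    [PseudoMetricSpace β] {s : Set α} (hs : IsCompact s) {g : α → β} (hg : Continuous g)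
    {δ : ℝ} (hδ : 0 < δ) :
    ∃ ε > 0, ∀ a ∈ s, ∀ b, dist a b < ε → dist (g a) (g b) < δ := by
  obtain ⟨ε, hε, h⟩ := mem_uniformity_dist.1 <|
    hs.uniformContinuousAt_of_continuousAt g (fun a _ => hg.continuousAt) (dist_mem_uniformity hδ)
  exact ⟨ε, hε, fun a ha b hab => h hab ha⟩

theorem ball_subset_image_ball_of_expanding {α β : Type*} [PseudoMetricSpace α]
    [PseudoMetricSpace β] {f : α ≃ β} {U : Set α} {lam : ℝ} (hlam : 0 < lam)
    (hexp : ∀ x ∈ U, ∀ y ∈ U, lam * dist x y ≤ dist (f x) (f y)) {x : α} (hx : x ∈ U)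
    {η : ℝ} (hpre : f.symm '' ball (f x) (lam * η) ⊆ U) :
    ball (f x) (lam * η) ⊆ f '' ball x η := by
  intro y hy
  have hzU : f.symm y ∈ U := hpre (mem_image_of_mem _ hy)
  have hexp_xz : lam * dist x (f.symm y) < lam * η := by
    calc lam * dist x (f.symm y) ≤ dist (f x) y := by simpa using hexp x hx _ hzU
      _ < lam * η := by rw [dist_comm]; exact hy
  exact ⟨f.symm y, mem_ball'.2 (lt_of_mul_lt_mul_left hexp_xz hlam.le), f.apply_symm_apply y⟩

theorem expanding_on_shrunken_subset_general {M : Type*} [MetricSpace M] [ProperSpace M]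
    (f : M ≃ₜ M) (U : Set M) (hUb : Bornology.IsBounded U)
    (lam : ℝ) (hlam : 1 < lam)
    (hexp : ∀ x ∈ U, ∀ y ∈ U, lam * dist x y ≤ dist (f x) (f y)) :
    ∀ δ : ℝ, 0 < δ → ∃ δ' : ℝ, 0 < δ' ∧
      (∀ x ∈ interior {z ∈ U | Metric.ball z δ ⊆ U},
        ∀ y ∈ interior {z ∈ U | Metric.ball z δ ⊆ U},
          lam * dist x y ≤ dist (f x) (f y)) ∧
      (∀ (x : M) (η : ℝ), 0 < η → η ≤ δ' →
        Metric.ball x η ⊆ interior {z ∈ U | Metric.ball z δ ⊆ U} →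
          Metric.ball (f x) (lam * η) ⊆ f '' Metric.ball x η) := by
  intro δ hδ
  have hlam0 : 0 < lam := one_pos.trans hlam
  have hU'U : interior {z ∈ U | ball z δ ⊆ U} ⊆ U := interior_subset.trans (sep_subset _ _)
  obtain ⟨ε, hε, hfsymm⟩ := (hUb.isCompact_closure.image f.continuous)
    |>.exists_pos_forall_dist_lt_of_continuous f.symm.continuous hδ
  refine ⟨ε / lam, by positivity, fun x hx y hy => hexp x (hU'U hx) y (hU'U hy), ?_⟩
  intro x η hη hηδ' hball
  obtain ⟨hxU, hballU⟩ : x ∈ {z ∈ U | ball z δ ⊆ U} := interior_subset (hball (mem_ball_self hη))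
  refine ball_subset_image_ball_of_expanding (f := f.toEquiv) hlam0 hexp hxU ?_
  rintro _ ⟨y, hy, rfl⟩
  have hyε : dist (f x) y < ε :=
    (mem_ball'.1 hy).trans_le (by rwa [le_div_iff₀' hlam0] at hηδ')
  apply hballU
  rw [mem_ball']
  simpa using hfsymm _ (mem_image_of_mem f (subset_closure hxU)) y hyε

/-- If `f` is `lam`-expanding on a bounded open subset `U` of a proper metric space, then
for every `δ > 0` there is `δ' > 0` such that `f` is `(lam, U'; δ')`-expanding, where
`U' = interior {x ∈ U | B_δ(x) ⊆ U}`. -/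
theorem expanding_on_shrunken_subset {M : Type*} [MetricSpace M] [ProperSpace M]
    (f : M ≃ₜ M) (U : Set M) (hUo : IsOpen U) (hUb : Bornology.IsBounded U)
    (lam : ℝ) (hlam : 1 < lam)
    (hexp : ∀ x ∈ U, ∀ y ∈ U, lam * dist x y ≤ dist (f x) (f y)) :
    ∀ δ : ℝ, 0 < δ → ∃ δ' : ℝ, 0 < δ' ∧
      (∀ x ∈ interior {z ∈ U | Metric.ball z δ ⊆ U},
        ∀ y ∈ interior {z ∈ U | Metric.ball z δ ⊆ U},
          lam * dist x y ≤ dist (f x) (f y)) ∧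
      (∀ (x : M) (η : ℝ), 0 < η → η ≤ δ' →
        Metric.ball x η ⊆ interior {z ∈ U | Metric.ball z δ ⊆ U} →
          Metric.ball (f x) (lam * η) ⊆ f '' Metric.ball x η) :=
  expanding_on_shrunken_subset_general f U hUb lam hlam hexp
end

section
/- Let f : X → Y be a continuous map between locally compact metrizable spaces, and let O_f denote the set of points x ∈ X at which f is open (i.e., f maps every neighborhood of x to a neighborhood of f(x)). If the complement X \ O_f is meagre (a countable union of nowhere dense sets), then f is quasi-open: the image of every subset of X with nonempty interior has nonempty interior in Y. -/
open Topology Set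

theorem mem_interior_image_of_forall_image_mem_nhds {X Y : Type*} [TopologicalSpace X]
    [TopologicalSpace Y] {f : X → Y} {x : X} (hx : ∀ V ∈ 𝓝 x, f '' V ∈ 𝓝 (f x)) {A : Set X}
    (hxA : x ∈ interior A) : f x ∈ interior (f '' A) :=
  mem_interior_iff_mem_nhds.mpr (hx A (mem_interior_iff_mem_nhds.mp hxA))

theorem interior_image_nonempty_of_isMeagre {X Y : Type*} [TopologicalSpace X]
    [TopologicalSpace Y] [BaireSpace X] {f : X → Y}
    (hmeagre : IsMeagre {x : X | ¬ ∀ V ∈ 𝓝 x, f '' V ∈ 𝓝 (f x)}) {A : Set X}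
    (hA : (interior A).Nonempty) : (interior (f '' A)).Nonempty := by
  obtain ⟨x, hxA, hx⟩ :=
    (dense_of_mem_residual hmeagre).inter_open_nonempty _ isOpen_interior hA
  rw [mem_compl_iff, mem_ofPred_eq, not_not] at hx
  exact ⟨f x, mem_interior_image_of_forall_image_mem_nhds hx hxA⟩

theorem quasiOpen_of_meagre_nonopen_locus_general {X Y : Type*}
    [TopologicalSpace X] [TopologicalSpace Y]
    [LocallyCompactSpace X]
    [TopologicalSpace.MetrizableSpace X]
    (f : X → Y)
    (hmeagre : IsMeagre {x : X | ¬ ∀ V ∈ nhds x, f '' V ∈ nhds (f x)}) :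
    ∀ A : Set X, (interior A).Nonempty → (interior (f '' A)).Nonempty :=
  -- `X` is a Baire space, being locally compact and Hausdorff.
  fun _ hA => interior_image_nonempty_of_isMeagre hmeagre hA

/-- If `f : X → Y` is a continuous map between locally compact metrizable spaces and the
set of points where `f` fails to be open is meagre, then `f` is quasi-open: images of sets
with nonempty interior have nonempty interior. -/
theorem quasiOpen_of_meagre_nonopen_locus {X Y : Type*}
    [TopologicalSpace X] [TopologicalSpace Y]
    [LocallyCompactSpace X] [LocallyCompactSpace Y]
    [TopologicalSpace.MetrizableSpace X] [TopologicalSpace.MetrizableSpace Y]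
    (f : X → Y) (hf : Continuous f)
    (hmeagre : IsMeagre {x : X | ¬ ∀ V ∈ nhds x, f '' V ∈ nhds (f x)}) :
    ∀ A : Set X, (interior A).Nonempty → (interior (f '' A)).Nonempty :=
  quasiOpen_of_meagre_nonopen_locus_general f hmeagre
end

section
/- Let (M,d) be a metric space, λ > 1, L ≥ λ, η > 0, and let U_0, U_1, …, U_n ⊆ M be subsets with homeomorphisms g_0, g_1, …, g_n of M such that each g_i⁻¹ is (λ, U_i; η)-expanding, g_0 is L-Lipschitz on a set containing all relevant balls, and there are points p_0, p_1, …, p_{n+1} with p_{i+1} = g_i⁻¹(p_i) and B_η(p_i) ⊆ U_i for i ≥ 1. Then, writing c_i = g_0 g_1 ⋯ g_i, the sets V_i = c_i(B_η(p_{i+1})) satisfy: (i) V_i ⊆ V_{i-1} for all 1 ≤ i ≤ n, and (ii) V_i ⊆ B_{Lη/λ^i}(p_0) for all 0 ≤ i ≤ n. -/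
/-!
Applying `g i` to the covering property of `(g i)⁻¹` at `p i` shows that `g i` maps
`B_{λr}(p_{i+1})` into `B_r(p_i)` for `0 < r ≤ η`. Since `c_i = c_{i-1} ∘ g_i`, induction gives
`c_i(B_{λ^i r}(p_{i+1})) ⊆ g_0(B_r(p_1)) ⊆ B_{Lr}(p_0)`; take `r = η / λ^i`. Nesting is the
single step with `r = η / λ`.
-/

open Metric Set

theorem image_ball_subset_ball_of_dist_le_mul {M N : Type*} [PseudoMetricSpace M]
    [PseudoMetricSpace N] {f : M → N} {x : M} {L η r : ℝ} (hL : 0 < L)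
    (hf : ∀ y ∈ ball x η, ∀ z ∈ ball x η, dist (f y) (f z) ≤ L * dist y z)
    (hr : 0 < r) (hrη : r ≤ η) :
    f '' ball x r ⊆ ball (f x) (L * r) := by
  rintro _ ⟨y, hy, rfl⟩
  have hyx : dist y x < r := mem_ball.1 hy
  rw [mem_ball]
  calc dist (f y) (f x) ≤ L * dist y x :=
        hf y (ball_subset_ball hrη hy) x (mem_ball_self (hr.trans_le hrη))
    _ < L * r := mul_lt_mul_of_pos_left hyx hL

section ExpandingChain

variable {M : Type*} [PseudoMetricSpace M] {n : ℕ} {lam L η : ℝ}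
  {g : ℕ → M ≃ₜ M} {U : ℕ → Set M} {p : ℕ → M} {c : ℕ → M ≃ₜ M}

theorem image_ball_mul_subset_ball
    (hballexp : ∀ i ≤ n, ∀ (x : M) (η' : ℝ), 0 < η' → η' ≤ η →
      ball x η' ⊆ U i →
        ball ((g i).symm x) (lam * η') ⊆ (g i).symm '' ball x η')
    (hp : ∀ i ≤ n, p (i + 1) = (g i).symm (p i))
    (hU : ∀ i, 1 ≤ i → i ≤ n → ball (p i) η ⊆ U i)
    {i : ℕ} (h1i : 1 ≤ i) (hin : i ≤ n) {r : ℝ} (hr : 0 < r) (hrη : r ≤ η) :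
    g i '' ball (p (i + 1)) (lam * r) ⊆ ball (p i) r := by
  rw [hp i hin]
  exact (Equiv.subset_symm_image (g i).toEquiv _ _).1 <|
    hballexp i hin (p i) r hr hrη ((ball_subset_ball hrη).trans (hU i h1i hin))

theorem image_ball_pow_mul_subset_ball (hlam : 1 ≤ lam) (hL : 0 < L)
    (hballexp : ∀ i ≤ n, ∀ (x : M) (η' : ℝ), 0 < η' → η' ≤ η →
      ball x η' ⊆ U i →
        ball ((g i).symm x) (lam * η') ⊆ (g i).symm '' ball x η')
    (hlip : ∀ x ∈ ball (p 1) η, ∀ y ∈ ball (p 1) η,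
      dist (g 0 x) (g 0 y) ≤ L * dist x y)
    (hp : ∀ i ≤ n, p (i + 1) = (g i).symm (p i))
    (hU : ∀ i, 1 ≤ i → i ≤ n → ball (p i) η ⊆ U i)
    (hc0 : c 0 = g 0) (hc : ∀ i, ⇑(c (i + 1)) = c i ∘ g (i + 1)) :
    ∀ i ≤ n, ∀ r, 0 < r → lam ^ i * r ≤ η →
      c i '' ball (p (i + 1)) (lam ^ i * r) ⊆ ball (p 0) (L * r) := by
  intro i
  induction i with
  | zero =>
    intro _ r hr hrη
    rw [pow_zero, one_mul] at hrη ⊢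
    have hp0 : g 0 (p 1) = p 0 := by rw [hp 0 n.zero_le, Homeomorph.apply_symm_apply]
    rw [hc0, ← hp0]
    exact image_ball_subset_ball_of_dist_le_mul hL hlip hr hrη
  | succ i ih =>
    intro hin r hr hrη
    have hstep : lam ^ i * r ≤ η := by
      refine le_trans ?_ hrη
      rw [pow_succ', mul_assoc]
      exact le_mul_of_one_le_left (by positivity) hlam
    rw [hc, image_comp, pow_succ', mul_assoc]
    exact (image_mono (image_ball_mul_subset_ball hballexp hp hU i.succ_pos hin
      (by positivity) hstep)).trans (ih (by omega) r hr hstep)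

end ExpandingChain

theorem nested_exponentially_shrinking_general {M : Type*} [MetricSpace M]
    (n : ℕ) (lam L η : ℝ) (hlam : 1 < lam) (hL : lam ≤ L) (hη : 0 < η)
    (g : ℕ → M ≃ₜ M) (U : ℕ → Set M) (p : ℕ → M) (c : ℕ → M ≃ₜ M)
    (hballexp : ∀ i ≤ n, ∀ (x : M) (η' : ℝ), 0 < η' → η' ≤ η →
      Metric.ball x η' ⊆ U i →
        Metric.ball ((g i).symm x) (lam * η') ⊆ (g i).symm '' Metric.ball x η')
    (hlip : ∀ x ∈ Metric.ball (p 1) η, ∀ y ∈ Metric.ball (p 1) η,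
      dist (g 0 x) (g 0 y) ≤ L * dist x y)
    (hp : ∀ i ≤ n, p (i + 1) = (g i).symm (p i))
    (hU : ∀ i, 1 ≤ i → i ≤ n → Metric.ball (p i) η ⊆ U i)
    (hc0 : c 0 = g 0) (hc : ∀ i, c (i + 1) = (g (i + 1)).trans (c i)) :
    (∀ i, 1 ≤ i → i ≤ n →
      (c i : M → M) '' Metric.ball (p (i + 1)) η ⊆
        (c (i - 1) : M → M) '' Metric.ball (p i) η) ∧
    (∀ i ≤ n,
      (c i : M → M) '' Metric.ball (p (i + 1)) η ⊆
        Metric.ball (p 0) (L * η / lam ^ i)) := by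
  have hlam0 : 0 < lam := one_pos.trans hlam
  have hcomp : ∀ i, ⇑(c (i + 1)) = c i ∘ g (i + 1) := fun i => by rw [hc i]; rfl
  refine ⟨fun i h1i hin => ?_, fun i hin => ?_⟩
  · obtain ⟨j, rfl⟩ := Nat.exists_eq_add_of_le' h1i
    have hshrink := image_ball_mul_subset_ball hballexp hp hU h1i hin
      (div_pos hη hlam0) (div_le_self hη.le hlam.le)
    rw [mul_div_cancel₀ η hlam0.ne'] at hshrink
    rw [hcomp, image_comp, Nat.add_sub_cancel]
    exact image_mono (hshrink.trans (ball_subset_ball (div_le_self hη.le hlam.le)))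
  · have hpow : lam ^ i * (η / lam ^ i) = η := mul_div_cancel₀ η (by positivity)
    have hshrink := image_ball_pow_mul_subset_ball hlam.le (hlam0.trans_le hL) hballexp hlip
      hp hU hc0 hcomp i hin (η / lam ^ i) (by positivity) hpow.le
    rwa [hpow, ← mul_div_assoc] at hshrink

/-- Key nesting lemma: given homeomorphisms `g 0, …, g n` whose inverses are
`(lam, U i; η)`-expanding, with `g 0` L-Lipschitz on the relevant ball, and a chain of
points `p i` with `p (i+1) = (g i)⁻¹ (p i)` and `B_η(p i) ⊆ U i` for `i ≥ 1`, the sets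
`V i = c i (B_η (p (i+1)))`, where `c i = g 0 ∘ g 1 ∘ ⋯ ∘ g i`, are nested and
exponentially shrinking: `V i ⊆ V (i-1)` and `V i ⊆ B_{L·η/lam^i}(p 0)`. -/
theorem nested_exponentially_shrinking {M : Type*} [MetricSpace M]
    (n : ℕ) (lam L η : ℝ) (hlam : 1 < lam) (hL : lam ≤ L) (hη : 0 < η)
    (g : ℕ → M ≃ₜ M) (U : ℕ → Set M) (p : ℕ → M) (c : ℕ → M ≃ₜ M)
    (hexp : ∀ i ≤ n, ∀ x ∈ U i, ∀ y ∈ U i,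
      lam * dist x y ≤ dist ((g i).symm x) ((g i).symm y))
    (hballexp : ∀ i ≤ n, ∀ (x : M) (η' : ℝ), 0 < η' → η' ≤ η →
      Metric.ball x η' ⊆ U i →
        Metric.ball ((g i).symm x) (lam * η') ⊆ (g i).symm '' Metric.ball x η')
    (hlip : ∀ x ∈ Metric.ball (p 1) η, ∀ y ∈ Metric.ball (p 1) η,
      dist (g 0 x) (g 0 y) ≤ L * dist x y)
    (hp : ∀ i ≤ n, p (i + 1) = (g i).symm (p i))
    (hU : ∀ i, 1 ≤ i → i ≤ n → Metric.ball (p i) η ⊆ U i)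
    (hc0 : c 0 = g 0) (hc : ∀ i, c (i + 1) = (g (i + 1)).trans (c i)) :
    (∀ i, 1 ≤ i → i ≤ n →
      (c i : M → M) '' Metric.ball (p (i + 1)) η ⊆
        (c (i - 1) : M → M) '' Metric.ball (p i) η) ∧
    (∀ i ≤ n,
      (c i : M → M) '' Metric.ball (p (i + 1)) η ⊆
        Metric.ball (p 0) (L * η / lam ^ i)) :=
  nested_exponentially_shrinking_general n lam L η hlam hL hη g U p c hballexp hlip hp hU hc0 hc
end

section
/- Let (M,d) be a metric space, Λ ⊆ M compact with no point of Λ isolated in M, and let a group Γ act on M by homeomorphisms preserving Λ. Suppose the action is expanding with expansion datum (𝒟, δ): for some x ∈ Λ and δ-code (α,p) with associated ray (c_i), the sets W_i = ρ(c_i)(B_δ(p_{i+1})) are nested neighborhoods of x with diameters tending to 0. Then: (1) there exist a point q ∈ Λ and a subsequence (g_j) of (c_i) such that ρ(g_j) converges to the constant map x uniformly on B_{δ/2}(q); and (2) there exists an infinite sequence (h_j) in Γ with ρ(h_j)(x) → x. In particular, x is a non-wandering point of the action. -/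
/-!
By compactness a subsequence of the points `p (i + 1)` converges to some `q ∈ Λ`, so eventually
`B_{δ/2}(q) ⊆ B_δ(p (i + 1))`. Each image `ρ (c i) (B_δ(p (i + 1)))` contains `x`, and their
diameters tend to `0`, which forces `ρ (c i) → x` uniformly on `B_{δ/2}(q)` along the subsequence.
Evaluating at one point `p (φ j₀ + 1)` of that ball, which `c (φ j₀)` sends to `x`, gives
`ρ (c (φ j) * (c (φ j₀))⁻¹) x → x`.
-/

open Filter Topology Set

theorem tendstoUniformlyOn_const_of_ediam_image_tendsto_zero {ι α β : Type*}
    [PseudoEMetricSpace β] {l : Filter ι} {F : ι → α → β} {S : ι → Set α} {s : Set α} {x : β}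
    (hx : ∀ᶠ i in l, x ∈ F i '' S i) (hs : ∀ᶠ i in l, s ⊆ S i)
    (hdiam : Tendsto (fun i => Metric.ediam (F i '' S i)) l (𝓝 0)) :
    TendstoUniformlyOn F (fun _ => x) l s := by
  rw [EMetric.tendstoUniformlyOn_iff]
  intro ε hε
  filter_upwards [hx, hs, hdiam.eventually_lt_const hε] with i hxi hsi hi z hz
  exact (Metric.edist_le_ediam_of_mem hxi (mem_image_of_mem _ (hsi hz))).trans_lt hi

theorem Homeomorph.apply_mul_inv_of_apply_eq {Γ M : Type*} [Group Γ] [TopologicalSpace M]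
    {ρ : Γ → M ≃ₜ M} (hρ : ∀ g h : Γ, ρ (g * h) = (ρ h).trans (ρ g))
    {g h : Γ} {x y : M} (hy : ρ h y = x) : ρ (g * h⁻¹) x = ρ g y := by
  have hmul : ρ (g * h⁻¹) = ρ g * (ρ h)⁻¹ := map_mul_inv (MonoidHom.mk' ρ hρ) g h
  rw [hmul, Homeomorph.mul_apply, Homeomorph.inv_apply, ← hy, Homeomorph.symm_apply_apply]

theorem nonwandering_of_code_general
    {Γ M : Type*} [Group Γ] [MetricSpace M]
    (ρ : Γ → M ≃ₜ M)
    (hρ : ∀ g h : Γ, ρ (g * h) = (ρ h).trans (ρ g))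
    (Λ : Set M) (hΛc : IsCompact Λ)
    (δ : ℝ) (hδ : 0 < δ) (x : M)
    (p : ℕ → M) (hpΛ : ∀ i, p i ∈ Λ) (c : ℕ → Γ)
    (hcode : ∀ i, ρ (c i) (p (i + 1)) = x)
    (hdiam : Filter.Tendsto
      (fun i => EMetric.diam (ρ (c i) '' Metric.ball (p (i + 1)) δ))
      Filter.atTop (nhds 0)) :
    (∃ q ∈ Λ, ∃ φ : ℕ → ℕ, StrictMono φ ∧
      TendstoUniformlyOn (fun j z => ρ (c (φ j)) z) (fun _ => x)
        Filter.atTop (Metric.ball q (δ / 2))) ∧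
    (∃ h : ℕ → Γ, Filter.Tendsto (fun j => ρ (h j) x) Filter.atTop (nhds x)) := by
  obtain ⟨q, hqΛ, φ, hφ, hpq⟩ := hΛc.tendsto_subseq (fun i => hpΛ (i + 1))
  have hnear : ∀ᶠ j in atTop, p (φ j + 1) ∈ Metric.ball q (δ / 2) :=
    hpq.eventually (Metric.ball_mem_nhds q (half_pos hδ))
  have hball : ∀ᶠ j in atTop, Metric.ball q (δ / 2) ⊆ Metric.ball (p (φ j + 1)) δ :=
    hnear.mono fun j hj => Metric.ball_subset_ball' <| by
      rw [Metric.mem_ball, dist_comm] at hj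
      linarith
  have hunif : TendstoUniformlyOn (fun j z => ρ (c (φ j)) z) (fun _ => x) atTop
      (Metric.ball q (δ / 2)) :=
    tendstoUniformlyOn_const_of_ediam_image_tendsto_zero
      (Eventually.of_forall fun j => ⟨p (φ j + 1), Metric.mem_ball_self hδ, hcode _⟩) hball
      (hdiam.comp hφ.tendsto_atTop)
  obtain ⟨j₀, hj₀⟩ := hnear.exists
  refine ⟨⟨q, hqΛ, φ, hφ, hunif⟩, fun j => c (φ j) * (c (φ j₀))⁻¹, ?_⟩
  simpa only [Homeomorph.apply_mul_inv_of_apply_eq hρ (hcode _)] using hunif.tendsto_at hj₀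

/-- Non-wandering dynamics from an expanding datum: given a compact invariant set `Λ`
(no point of which is isolated in `M`), a point `x ∈ Λ` with a code `(c, p)` whose
associated sets `W i = ρ (c i) (B_δ (p (i+1)))` are nested neighborhoods of `x` with
diameters tending to `0`, then (1) there are a point `q ∈ Λ` and a subsequence `c ∘ φ`
such that `ρ (c (φ j))` converges to the constant map `x` uniformly on `B_{δ/2}(q)`, and
(2) there is an infinite sequence `h : ℕ → Γ` with `ρ (h j) x → x`. -/
theorem nonwandering_of_code
    {Γ M : Type*} [Group Γ] [MetricSpace M]
    (ρ : Γ → M ≃ₜ M)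
    (hρ : ∀ g h : Γ, ρ (g * h) = (ρ h).trans (ρ g))
    (hρ1 : ρ 1 = Homeomorph.refl M)
    (Λ : Set M) (hΛc : IsCompact Λ) (hinv : ∀ g : Γ, ρ g '' Λ = Λ)
    (hnoiso : ∀ z ∈ Λ, Filter.NeBot (nhdsWithin z {z}ᶜ))
    (δ : ℝ) (hδ : 0 < δ) (x : M) (hx : x ∈ Λ)
    (p : ℕ → M) (hpΛ : ∀ i, p i ∈ Λ) (c : ℕ → Γ)
    (hcode : ∀ i, ρ (c i) (p (i + 1)) = x)
    (hnest : ∀ i, ρ (c (i + 1)) '' Metric.ball (p (i + 2)) δ ⊆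
      ρ (c i) '' Metric.ball (p (i + 1)) δ)
    (hmem : ∀ i, x ∈ ρ (c i) '' Metric.ball (p (i + 1)) δ)
    (hdiam : Filter.Tendsto
      (fun i => EMetric.diam (ρ (c i) '' Metric.ball (p (i + 1)) δ))
      Filter.atTop (nhds 0)) :
    (∃ q ∈ Λ, ∃ φ : ℕ → ℕ, StrictMono φ ∧
      TendstoUniformlyOn (fun j z => ρ (c (φ j)) z) (fun _ => x)
        Filter.atTop (Metric.ball q (δ / 2))) ∧
    (∃ h : ℕ → Γ, Filter.Tendsto (fun j => ρ (h j) x) Filter.atTop (nhds x)) :=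
  nonwandering_of_code_general ρ hρ Λ hΛc δ hδ x p hpΛ c hcode hdiam
end
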